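/- Let f(x) = sin(x)(1 - 1/(8 sin(x/2)^3)). There exists a unique critical point θ_c of f in (0, π); moreover θ_c > 3π/5, f'(θ) > 0 for θ in (0, θ_c), and f'(θ) < 0 for θ in (θ_c, π). -/

import Mathlib

open Real Set

noncomputable def f (x : ℝ) : ℝ := Real.sin x * (1 - 1 / (8 * (Real.sin (x/2))^3))

/-!
With `s = sin (x / 2)` one has `f' x = p s / (8 s³)` for the quintic
`p s = 2 - s² + 8 s³ - 16 s⁵` (`derivNumerator`). It is positive on `(0, 1/2]` and strictly
decreasing on `[1/2, 1]`; it is positive at `cos (π / 5) = sin (3π / 10) = (1 + √5) / 4` and equals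
`-7` at `1`, so on `(0, 1]` it changes sign exactly once, at some `r > (1 + √5) / 4`. As
`x ↦ sin (x / 2)` is increasing on `(0, π)`, the sign of `f'` there is that of `θc - x` with
`θc = 2 arcsin r > 3π / 5`.
-/

theorem StrictMonoOn.sign_sub_eq {α β : Type*} [AddCommGroup α] [LinearOrder α]
    [IsOrderedAddMonoid α] [AddCommGroup β] [LinearOrder β] [IsOrderedAddMonoid β]
    {φ : α → β} {s : Set α} (hφ : StrictMonoOn φ s) {a b : α} (ha : a ∈ s) (hb : b ∈ s) :
    SignType.sign (φ a - φ b) = SignType.sign (a - b) := by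
  rcases lt_trichotomy a b with hab | rfl | hab
  · rw [sign_neg (sub_neg.mpr (hφ ha hb hab)), sign_neg (sub_neg.mpr hab)]
  · simp
  · rw [sign_pos (sub_pos.mpr (hφ hb ha hab)), sign_pos (sub_pos.mpr hab)]

theorem strictMonoOn_sin_half : StrictMonoOn (fun x => sin (x / 2)) (Icc (-π) π) :=
  fun a ha b hb hab => strictMonoOn_sin ⟨by linarith [ha.1], by linarith [ha.2]⟩
    ⟨by linarith [hb.1], by linarith [hb.2]⟩ (by linarith)

theorem sin_half_pos {x : ℝ} (hx : x ∈ Ioo 0 (2 * π)) : 0 < sin (x / 2) :=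
  sin_pos_of_pos_of_lt_pi (by linarith [hx.1]) (by linarith [hx.2])

theorem hasDerivAt_f {x : ℝ} (hx : sin (x / 2) ≠ 0) :
    HasDerivAt f (cos x + (3 + cos x) / (16 * sin (x / 2) ^ 3)) x := by
  have hden : 8 * sin (x / 2) ^ 3 ≠ 0 := by positivity
  have hhalf : HasDerivAt (fun y => sin (y / 2)) (cos (x / 2) * (1 / 2)) x :=
    ((hasDerivAt_id' x).div_const 2).sin
  have h := (hasDerivAt_sin x).mul ((((hhalf.pow 3).const_mul 8).inv hden).const_sub 1)
  have hsin : sin x = 2 * sin (x / 2) * cos (x / 2) := by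
    rw [← sin_two_mul, mul_div_cancel₀ x two_ne_zero]
  have hcos : cos (x / 2) ^ 2 = 1 / 2 + cos x / 2 := by
    rw [cos_sq, mul_div_cancel₀ x two_ne_zero]
  have hf : f = fun y => sin y * (1 - (8 * sin (y / 2) ^ 3)⁻¹) := by
    ext y; simp [f]
  rw [hf]
  refine h.congr_deriv ?_
  simp only [Pi.inv_apply, Pi.pow_apply, hsin]
  field_simp
  linear_combination 48 * sin (x / 2) ^ 2 * hcos

noncomputable def derivNumerator (s : ℝ) : ℝ := 2 - s ^ 2 + 8 * s ^ 3 - 16 * s ^ 5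

theorem deriv_f_eq {x : ℝ} (hx : sin (x / 2) ≠ 0) :
    deriv f x = derivNumerator (sin (x / 2)) / (8 * sin (x / 2) ^ 3) := by
  have hcos : cos x = 1 - 2 * sin (x / 2) ^ 2 := by
    have h := cos_two_mul' (x / 2)
    rw [mul_div_cancel₀ x two_ne_zero] at h
    linear_combination h + sin_sq_add_cos_sq (x / 2)
  rw [(hasDerivAt_f hx).deriv, derivNumerator, hcos]
  field_simp
  ring

theorem sign_deriv_f {x : ℝ} (hx : 0 < sin (x / 2)) :
    SignType.sign (deriv f x) = SignType.sign (derivNumerator (sin (x / 2))) := by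
  rw [deriv_f_eq hx.ne', div_eq_mul_inv, sign_mul,
    sign_pos (by positivity : 0 < (8 * sin (x / 2) ^ 3)⁻¹), mul_one]

theorem derivNumerator_pos_of_le_half {s : ℝ} (hs0 : 0 < s) (hs : s ≤ 1 / 2) :
    0 < derivNumerator s := by
  have hcubic : 0 ≤ 8 * s ^ 3 * (1 - 2 * s ^ 2) := by
    have : 0 ≤ 1 - 2 * s ^ 2 := by nlinarith
    positivity
  unfold derivNumerator
  nlinarith

theorem strictAntiOn_derivNumerator : StrictAntiOn derivNumerator (Icc (1 / 2) 1) := by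
  refine strictAntiOn_of_hasDerivWithinAt_neg (convex_Icc _ _)
    (by unfold derivNumerator; fun_prop) (f' := fun s => -2 * s + 24 * s ^ 2 - 80 * s ^ 4)
    (fun s _ => ?_) fun s hs => ?_
  · have h := (((hasDerivAt_const s 2).sub (hasDerivAt_pow 2 s)).add
      ((hasDerivAt_pow 3 s).const_mul 8)).sub ((hasDerivAt_pow 5 s).const_mul 16)
    refine (h.congr_deriv ?_).hasDerivWithinAt
    norm_num
    ring
  · rw [interior_Icc] at hs
    obtain ⟨h1, h2⟩ := hs
    -- the derivative is `-2 s (2 s - 1) (20 s² + 10 s - 1)`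
    nlinarith [mul_pos (mul_pos (by linarith : (0:ℝ) < s) (by linarith : (0:ℝ) < 2 * s - 1))
      (by nlinarith : 0 < 20 * s ^ 2 + 10 * s - 1)]

theorem sign_derivNumerator {r s : ℝ} (hr : derivNumerator r = 0) (hr_half : 1 / 2 < r)
    (hr_one : r ≤ 1) (hs0 : 0 < s) (hs1 : s ≤ 1) :
    SignType.sign (derivNumerator s) = SignType.sign (r - s) := by
  have hr_mem : r ∈ Icc (1 / 2 : ℝ) 1 := ⟨hr_half.le, hr_one⟩
  rcases lt_trichotomy s r with hsr | rfl | hsr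
  · rw [sign_pos (sub_pos.mpr hsr), sign_eq_one_iff]
    rcases le_or_gt s (1 / 2) with hs | hs
    · exact derivNumerator_pos_of_le_half hs0 hs
    · exact hr ▸ strictAntiOn_derivNumerator ⟨hs.le, hs1⟩ hr_mem hsr
  · rw [hr, sub_self]
  · rw [sign_neg (sub_neg.mpr hsr), sign_eq_neg_one_iff]
    exact hr ▸ strictAntiOn_derivNumerator hr_mem ⟨by linarith, hs1⟩ hsr

theorem derivNumerator_cos_pi_div_five :
    derivNumerator ((1 + √5) / 4) = (7 - 3 * √5) / 8 := by
  have h5 : √5 ^ 2 = 5 := sq_sqrt (by norm_num)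
  unfold derivNumerator
  linear_combination (-(16 * √5 ^ 3 + 80 * √5 ^ 2 + 112 * √5 + 240) / 1024) * h5

theorem exists_derivNumerator_eq_zero :
    ∃ r ∈ Ioo ((1 + √5) / 4) 1, derivNumerator r = 0 := by
  have h5 : √5 < 7 / 3 := by
    rw [sqrt_lt' (by norm_num)]; norm_num
  have hle : (1 + √5) / 4 ≤ 1 := by linarith
  refine intermediate_value_Ioo' hle (by unfold derivNumerator; fun_prop) ⟨?_, ?_⟩
  · norm_num [derivNumerator]
  · rw [derivNumerator_cos_pi_div_five]; linarith

theorem stmt5 : ∃ θc ∈ Ioo (0:ℝ) π, deriv f θc = 0 ∧ θc > 3*π/5 ∧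
    (∀ θ ∈ Ioo (0:ℝ) θc, deriv f θ > 0) ∧
    (∀ θ ∈ Ioo θc π, deriv f θ < 0) ∧
    (∀ θ ∈ Ioo (0:ℝ) π, deriv f θ = 0 → θ = θc) := by
  obtain ⟨r, ⟨hr_lo, hr_hi⟩, hr⟩ := exists_derivNumerator_eq_zero
  have hr_half : 1 / 2 < r := by
    have : 1 < √5 := by rw [lt_sqrt zero_le_one]; norm_num
    linarith
  set θc := 2 * arcsin r
  have hθc_half : sin (θc / 2) = r := by
    rw [mul_div_cancel_left₀ _ two_ne_zero, sin_arcsin (by linarith) hr_hi.le]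
  have hθc : θc ∈ Ioo 0 π :=
    ⟨by simp [θc, arcsin_pos.mpr (by linarith : 0 < r)],
      by linarith [arcsin_lt_pi_div_two.mpr hr_hi]⟩
  have hIcc : Ioo 0 π ⊆ Icc (-π) π := fun x hx => ⟨by linarith [hx.1, pi_pos], hx.2.le⟩
  have hsign : ∀ θ ∈ Ioo 0 π, SignType.sign (deriv f θ) = SignType.sign (θc - θ) := by
    intro θ hθ
    have hs0 := sin_half_pos ⟨hθ.1, by linarith [hθ.2, pi_pos]⟩
    rw [sign_deriv_f hs0, sign_derivNumerator hr hr_half hr_hi.le hs0 (sin_le_one _),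
      ← hθc_half]
    exact strictMonoOn_sin_half.sign_sub_eq (hIcc hθc) (hIcc hθ)
  refine ⟨θc, hθc, by simpa using hsign θc hθc, ?_, fun θ hθ => ?_, fun θ hθ => ?_,
    fun θ hθ hzero => ?_⟩
  · have h35 : sin (3 * π / 5 / 2) = (1 + √5) / 4 := by
      rw [show 3 * π / 5 / 2 = π / 2 - π / 5 by ring, sin_pi_div_two_sub, cos_pi_div_five]
    refine (strictMonoOn_sin_half.lt_iff_lt ⟨by linarith [pi_pos], by linarith [pi_pos]⟩
      (hIcc hθc)).mp ?_
    simpa only [h35, hθc_half] using hr_lo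
  · rw [gt_iff_lt, ← sign_eq_one_iff, hsign θ ⟨hθ.1, hθ.2.trans hθc.2⟩,
      sign_pos (sub_pos.mpr hθ.2)]
  · rw [← sign_eq_neg_one_iff, hsign θ ⟨hθc.1.trans hθ.1, hθ.2⟩, sign_neg (sub_neg.mpr hθ.1)]
  · have h : SignType.sign (θc - θ) = 0 := by simp [← hsign θ hθ, hzero]
    exact (sub_eq_zero.mp (sign_eq_zero_iff.mp h)).symm
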